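/- Let X be an open connected subset of ℝ^n, φ ∈ C^∞(X;ℝ), and let η = Σ'_{|I|=k} η_I dx^I be a smooth compactly supported k-form on X. Then ∫_X Σ'_{|J|=k−1} | Σ'_{|I|=k} Σ_{ℓ=1}^{n} sign(ℓJ, I) δ^φ_ℓ(η_I) |² e^{−φ} dV = ∫_X Σ'_{|J|=k−1} Σ'_{|I₁|=k} Σ'_{|I₂|=k} Σ_{ℓ₁,ℓ₂=1}^{n} sign(ℓ₁J, I₁) sign(ℓ₂J, I₂) ( (∂η_{I₁}/∂x^{ℓ₂})(∂η_{I₂}/∂x^{ℓ₁}) + (∂²φ/∂x^{ℓ₁}∂x^{ℓ₂}) η_{I₁} η_{I₂} ) e^{−φ} dV. -/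

import Mathlib

open MeasureTheory Real Topology Filter

noncomputable section

/-- Euclidean space `ℝⁿ`. -/
abbrev Euc (n : ℕ) := EuclideanSpace ℝ (Fin n)

/-- Strictly increasing multi-indices of length `k` in `{1,…,n}`, encoded as
`k`-element subsets of `Fin n`. -/
abbrev MIdx (n k : ℕ) := {s : Finset (Fin n) // s.card = k}

/-- A `k`-form on (an open subset of) `ℝⁿ`, given by its coefficient functions with respect to
the standard basis `dx^I`, `I` a strictly increasing multi-index of length `k`. -/
abbrev Form (n k : ℕ) := Euc n → MIdx n k → ℝ

/-- `msign ℓ J I` is the sign of the permutation rearranging the multi-index `(ℓ, j₁, …, j_m)`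
(`J = (j₁ < ⋯ < j_m)`) into the strictly increasing multi-index `I`, if the former is a
permutation of `I`, and `0` otherwise. -/
def msign {n : ℕ} (ℓ : Fin n) (J I : Finset (Fin n)) : ℝ :=
  if ℓ ∉ J ∧ insert ℓ J = I then (-1 : ℝ) ^ (J.filter (fun j => j < ℓ)).card else 0

/-- The partial derivative `∂f/∂xℓ` at `x`. -/
def pder {n : ℕ} (ℓ : Fin n) (f : Euc n → ℝ) (x : Euc n) : ℝ :=
  fderiv ℝ f x (EuclideanSpace.single ℓ 1)

/-- Coefficients of the exterior derivative `dη` of a (differentiable) `k`-form `η`. -/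
def dcoef {n k : ℕ} (η : Form n k) : Form n (k + 1) := fun x H =>
  ∑ I : MIdx n k, ∑ ℓ : Fin n, msign ℓ I.1 H.1 * pder ℓ (fun y => η y I) x

/-- A smooth compactly supported `k`-form with support contained in `X`. -/
def IsTestForm {n k : ℕ} (X : Set (Euc n)) (η : Form n k) : Prop :=
  (∀ I, ContDiff ℝ (⊤ : ℕ∞) fun x => η x I) ∧
  (∀ I, HasCompactSupport fun x => η x I) ∧
  (∀ I, tsupport (fun x => η x I) ⊆ X)

/-- The weighted inner product `⟨u,v⟩_φ = ∫_X ⟨u,v⟩ e^{−φ} dV` of two `k`-forms. -/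
def wInner {n k : ℕ} (X : Set (Euc n)) (φ : Euc n → ℝ) (u v : Form n k) : ℝ :=
  ∫ x in X, (∑ I : MIdx n k, u x I * v x I) * exp (-φ x)

/-- The squared weighted norm `‖u‖²_φ = ∫_X |u|² e^{−φ} dV` of a `k`-form. -/
def wNormSq {n k : ℕ} (X : Set (Euc n)) (φ : Euc n → ℝ) (u : Form n k) : ℝ :=
  wInner X φ u u

/-- The weighted norm `‖u‖_φ`. -/
def wNorm {n k : ℕ} (X : Set (Euc n)) (φ : Euc n → ℝ) (u : Form n k) : ℝ :=
  Real.sqrt (wNormSq X φ u)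

/-- Membership in `L²_k(X, φ)`: each coefficient is measurable and square-integrable on `X`
with respect to the weight `e^{−φ}`. -/
def MemL2Form {n k : ℕ} (X : Set (Euc n)) (φ : Euc n → ℝ) (u : Form n k) : Prop :=
  ∀ I, AEStronglyMeasurable (fun x => u x I) (volume.restrict X) ∧
    Integrable (fun x => (u x I) ^ 2 * exp (-φ x)) (volume.restrict X)

/-- `w` is the distributional exterior derivative of the `k`-form `u` on `X`:
for every smooth compactly supported `(k+1)`-form `ψ` with support in `X`,
`∫_X ⟨w, ψ⟩ = ∫_X ⟨u, d*₀₀ ψ⟩`, where `d*₀₀` is the unweighted formal adjoint of `d`. -/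
def HasDistD {n k : ℕ} (X : Set (Euc n)) (u : Form n k) (w : Form n (k + 1)) : Prop :=
  ∀ ψ : Form n (k + 1), IsTestForm X ψ →
    (∫ x in X, ∑ H : MIdx n (k + 1), w x H * ψ x H) =
      ∫ x in X, ∑ I : MIdx n k, u x I *
        (-∑ H : MIdx n (k + 1), ∑ ℓ : Fin n, msign ℓ I.1 H.1 * pder ℓ (fun y => ψ y H) x)

/-- `u` belongs to the domain of `d : L²_k(X,φa) ⇸ L²_{k+1}(X,φb)`. -/
def InDomD {n k : ℕ} (X : Set (Euc n)) (φa φb : Euc n → ℝ) (u : Form n k) : Prop :=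
  MemL2Form X φa u ∧ ∃ w : Form n (k + 1), HasDistD X u w ∧ MemL2Form X φb w

/-- `w` is the value of the Hilbert-space adjoint `d*_{φ₂,φ₁}` of
`d : L²_k(X,φ₁) ⇸ L²_{k+1}(X,φ₂)` at `v`; in particular `v ∈ dom d*_{φ₂,φ₁}`. -/
def IsAdjointVal {n k : ℕ} (X : Set (Euc n)) (φ₁ φ₂ : Euc n → ℝ)
    (v : Form n (k + 1)) (w : Form n k) : Prop :=
  MemL2Form X φ₂ v ∧ MemL2Form X φ₁ w ∧
  ∀ (u : Form n k) (du : Form n (k + 1)), MemL2Form X φ₁ u → HasDistD X u du →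
    MemL2Form X φ₂ du → wInner X φ₂ du v = wInner X φ₁ u w

/-- The formal adjoint `d*_{φ₂,φ₁} v = e^{φ₁} d*₀₀ (e^{−φ₂} v)` of the exterior derivative
`d : L²(X,φ₁) ⇸ L²(X,φ₂)`, computed on a (differentiable) `k`-form `v`. -/
def dstarW {n k : ℕ} (φ₁ φ₂ : Euc n → ℝ) (v : Form n k) : Form n (k - 1) := fun x J =>
  -exp (φ₁ x) * ∑ I : MIdx n k, ∑ ℓ : Fin n,
    msign ℓ J.1 I.1 * pder ℓ (fun y => v y I * exp (-φ₂ y)) x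

/-- The operator `δ^φ_ℓ(f) = (∂φ/∂xℓ)·f − ∂f/∂xℓ`. -/
def deltaOp {n : ℕ} (φ : Euc n → ℝ) (ℓ : Fin n) (f : Euc n → ℝ) (x : Euc n) : ℝ :=
  pder ℓ φ x * f x - pder ℓ f x

/-- The Hessian matrix `(∂²φ/∂xᵃ∂xᵇ)(x)`. -/
def hessMat {n : ℕ} (φ : Euc n → ℝ) (x : Euc n) (a b : Fin n) : ℝ :=
  pder a (fun y => pder b φ y) x

end


section AuxProof

open Real MeasureTheory

variable {n : ℕ}

lemma pder_eq_zero_of_not_mem_tsupport {f : Euc n → ℝ} {x : Euc n}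
    (hx : x ∉ tsupport f) (ℓ : Fin n) : pder ℓ f x = 0 := by
  have h : f =ᶠ[nhds x] (fun _ => 0) := notMem_tsupport_iff_eventuallyEq.1 hx
  rw [pder, h.fderiv_eq]
  simp

lemma contDiffAt_pder {f : Euc n → ℝ} {x : Euc n} (hf : ContDiffAt ℝ (⊤:ℕ∞) f x) (ℓ : Fin n) :
    ContDiffAt ℝ (⊤:ℕ∞) (fun y => pder ℓ f y) x := by
  have h1 : ContDiffAt ℝ (⊤:ℕ∞) (fderiv ℝ f) x := hf.fderiv_right (by simp)
  exact ((ContinuousLinearMap.apply ℝ ℝ (EuclideanSpace.single ℓ 1)).contDiff.contDiffAt).comp x h1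

lemma contDiff_pder {f : Euc n → ℝ} (hf : ContDiff ℝ (⊤:ℕ∞) f) (ℓ : Fin n) :
    ContDiff ℝ (⊤:ℕ∞) (fun y => pder ℓ f y) := by
  have h1 : ContDiff ℝ (⊤:ℕ∞) (fderiv ℝ f) := hf.fderiv_right (by simp)
  exact ((ContinuousLinearMap.apply ℝ ℝ (EuclideanSpace.single ℓ 1)).contDiff.comp h1 : _)

lemma pder_mul {f g : Euc n → ℝ} {x : Euc n} (hf : DifferentiableAt ℝ f x)
    (hg : DifferentiableAt ℝ g x) (ℓ : Fin n) :
    pder ℓ (fun y => f y * g y) x = pder ℓ f x * g x + f x * pder ℓ g x := by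
  unfold pder
  rw [fderiv_fun_mul hf hg]
  simp
  ring

lemma pder_sub {f g : Euc n → ℝ} {x : Euc n} (hf : DifferentiableAt ℝ f x)
    (hg : DifferentiableAt ℝ g x) (ℓ : Fin n) :
    pder ℓ (fun y => f y - g y) x = pder ℓ f x - pder ℓ g x := by
  unfold pder
  rw [fderiv_fun_sub hf hg]
  simp

lemma pder_exp_neg {φ : Euc n → ℝ} {x : Euc n} (hφ : DifferentiableAt ℝ φ x) (ℓ : Fin n) :
    pder ℓ (fun y => exp (-φ y)) x = -pder ℓ φ x * exp (-φ x) := by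
  have h : HasFDerivAt (fun y => exp (-φ y)) (exp (-φ x) • (-fderiv ℝ φ x)) x :=
    (hφ.hasFDerivAt.neg).exp
  rw [pder, h.fderiv]
  simp [pder]
  ring

lemma pder_pder_comm {f : Euc n → ℝ} (hf : ContDiff ℝ (⊤:ℕ∞) f) (x : Euc n) (a b : Fin n) :
    pder a (fun y => pder b f y) x = pder b (fun y => pder a f y) x := by
  have hs : IsSymmSndFDerivAt ℝ f x := hf.contDiffAt.isSymmSndFDerivAt (by rw [minSmoothness_of_isRCLikeNormedField]; norm_cast)
  have h1 : ContDiff ℝ (⊤:ℕ∞) (fderiv ℝ f) := hf.fderiv_right (by simp)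
  have hd : DifferentiableAt ℝ (fderiv ℝ f) x := (h1.differentiable (by simp)).differentiableAt
  have key : ∀ w : Euc n, fderiv ℝ (fun y => fderiv ℝ f y w) x
      = (ContinuousLinearMap.apply ℝ ℝ w).comp (fderiv ℝ (fderiv ℝ f) x) := fun w =>
    (((ContinuousLinearMap.apply ℝ ℝ w).hasFDerivAt).comp x hd.hasFDerivAt).fderiv
  simp only [pder]
  rw [key, key]
  exact hs _ _

lemma continuous_glue {X K : Set (Euc n)} (hX : IsOpen X) (hK : IsClosed K) (hKX : K ⊆ X)
    {f : Euc n → ℝ} (hf : ∀ x ∈ X, ContinuousAt f x) (h0 : ∀ x ∉ K, f x = 0) :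
    Continuous f := by
  rw [continuous_iff_continuousAt]
  intro x
  by_cases hx : x ∈ X
  · exact hf x hx
  · have hxK : x ∉ K := fun h => hx (hKX h)
    have he : f =ᶠ[nhds x] (fun _ => 0) := by
      filter_upwards [hK.isOpen_compl.mem_nhds hxK] with y hy using h0 y hy
    exact ContinuousAt.congr continuousAt_const he.symm

lemma integrable_glue {X K : Set (Euc n)} (hX : IsOpen X) (hKc : IsCompact K) (hKX : K ⊆ X)
    {f : Euc n → ℝ} (hf : ∀ x ∈ X, ContinuousAt f x) (h0 : ∀ x ∉ K, f x = 0) :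
    Integrable f := by
  have hc : Continuous f := continuous_glue hX hKc.isClosed hKX hf h0
  exact hc.integrable_of_hasCompactSupport (HasCompactSupport.intro hKc h0)

lemma integral_pder_eq_zero {F : Euc n → ℝ} (hFd : Differentiable ℝ F)
    (hFc : HasCompactSupport F) (ℓ : Fin n) (hF' : Continuous fun x => pder ℓ F x) :
    ∫ x, pder ℓ F x = 0 := by
  have hFi : Integrable F := hFd.continuous.integrable_of_hasCompactSupport hFc
  have h's : HasCompactSupport fun x => pder ℓ F x :=
    HasCompactSupport.intro hFc fun x hx => pder_eq_zero_of_not_mem_tsupport hx ℓ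
  have h'i : Integrable (fun x => pder ℓ F x) := hF'.integrable_of_hasCompactSupport h's
  have h := integral_mul_fderiv_eq_neg_fderiv_mul_of_integrable
    (f := fun _ : Euc n => (1:ℝ)) (g := F) (v := EuclideanSpace.single ℓ 1) (μ := volume)
    ?_ ?_ ?_ (fun x _ => differentiableAt_const 1) (fun x _ => hFd x)
  · simpa [pder] using h
  · simpa [fderiv_const] using (integrable_zero _ _ (volume : Measure (Euc n)))
  · simpa [pder] using h'i
  · simpa using hFi

lemma pder_mul_left_eq_zero {u g : Euc n → ℝ} {x : Euc n} (hx : x ∉ tsupport u) (ℓ : Fin n) :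
    pder ℓ (fun y => u y * g y) x = 0 := by
  have h : u =ᶠ[nhds x] (fun _ => 0) := notMem_tsupport_iff_eventuallyEq.1 hx
  have h2 : (fun y => u y * g y) =ᶠ[nhds x] (fun _ => 0) :=
    h.mono fun y hy => by simp_all
  rw [pder, h2.fderiv_eq]
  simp

lemma aux_F {X : Set (Euc n)} (hXo : IsOpen X) {u g : Euc n → ℝ}
    (hu : ContDiff ℝ (⊤:ℕ∞) u) (huc : HasCompactSupport u) (hus : tsupport u ⊆ X)
    (hg : ∀ x ∈ X, ContDiffAt ℝ (⊤:ℕ∞) g x) (ℓ : Fin n) :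
    Integrable (fun x => pder ℓ (fun y => u y * g y) x) ∧
      (∫ x, pder ℓ (fun y => u y * g y) x) = 0 := by
  have hdiff : Differentiable ℝ (fun y => u y * g y) := by
    intro x
    by_cases hx : x ∈ X
    · exact ((hu.differentiable (by norm_cast)) x).mul ((hg x hx).differentiableAt (by norm_cast))
    · have hxu : x ∉ tsupport u := fun h => hx (hus h)
      have h : (fun y => u y * g y) =ᶠ[nhds x] (fun _ => 0) :=
        (notMem_tsupport_iff_eventuallyEq.1 hxu).mono fun y hy => by simp_all
      exact (differentiableAt_const 0).congr_of_eventuallyEq h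
  have hcs : HasCompactSupport (fun y => u y * g y) := huc.mul_right
  have hcont : Continuous fun x => pder ℓ (fun y => u y * g y) x := by
    apply continuous_glue hXo (isClosed_tsupport u) hus
    · intro x hx
      exact (contDiffAt_pder (hu.contDiffAt.mul (hg x hx)) ℓ).continuousAt
    · intro x hx
      exact pder_mul_left_eq_zero hx ℓ
  refine ⟨hcont.integrable_of_hasCompactSupport ?_, integral_pder_eq_zero hdiff hcs ℓ hcont⟩
  exact HasCompactSupport.intro hcs fun x hx => pder_eq_zero_of_not_mem_tsupport hx ℓ

lemma integrable_dd {X : Set (Euc n)} (hXo : IsOpen X) {φ : Euc n → ℝ}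
    (hφ : ContDiffOn ℝ (⊤ : ℕ∞) φ X)
    {u v : Euc n → ℝ} (hu : ContDiff ℝ (⊤ : ℕ∞) u) (huc : HasCompactSupport u)
    (hus : tsupport u ⊆ X) (hv : ContDiff ℝ (⊤ : ℕ∞) v) (ℓ₁ ℓ₂ : Fin n) :
    Integrable (fun x => deltaOp φ ℓ₁ u x * deltaOp φ ℓ₂ v x * exp (-φ x)) := by
  have hφx : ∀ x ∈ X, ContDiffAt ℝ (⊤:ℕ∞) φ x := fun x hx => hφ.contDiffAt (hXo.mem_nhds hx)
  apply integrable_glue hXo huc hus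
  · intro x hx
    simp only [deltaOp]
    exact (((((contDiffAt_pder (hφx x hx) ℓ₁).continuousAt).mul
      hu.continuous.continuousAt).sub
      ((contDiff_pder hu ℓ₁).continuous.continuousAt)).mul
      ((((contDiffAt_pder (hφx x hx) ℓ₂).continuousAt).mul
      hv.continuous.continuousAt).sub
      ((contDiff_pder hv ℓ₂).continuous.continuousAt))).mul
      (((hφx x hx).continuousAt).neg.rexp)
  · intro x hx
    simp [deltaOp, image_eq_zero_of_notMem_tsupport hx, pder_eq_zero_of_not_mem_tsupport hx]

lemma integrable_ph {X : Set (Euc n)} (hXo : IsOpen X) {φ : Euc n → ℝ}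
    (hφ : ContDiffOn ℝ (⊤ : ℕ∞) φ X)
    {u v : Euc n → ℝ} (hu : ContDiff ℝ (⊤ : ℕ∞) u) (huc : HasCompactSupport u)
    (hus : tsupport u ⊆ X) (hv : ContDiff ℝ (⊤ : ℕ∞) v) (ℓ₁ ℓ₂ : Fin n) :
    Integrable (fun x =>
      (pder ℓ₂ u x * pder ℓ₁ v x + hessMat φ x ℓ₁ ℓ₂ * u x * v x) * exp (-φ x)) := by
  have hφx : ∀ x ∈ X, ContDiffAt ℝ (⊤:ℕ∞) φ x := fun x hx => hφ.contDiffAt (hXo.mem_nhds hx)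
  apply integrable_glue hXo huc hus
  · intro x hx
    refine ContinuousAt.mul (ContinuousAt.add
      (((contDiff_pder hu ℓ₂).continuous.continuousAt).mul
        ((contDiff_pder hv ℓ₁).continuous.continuousAt))
      ((ContinuousAt.mul ?_ hu.continuous.continuousAt).mul hv.continuous.continuousAt))
      (((hφx x hx).continuousAt).neg.rexp)
    exact (contDiffAt_pder (contDiffAt_pder (hφx x hx) ℓ₂) ℓ₁).continuousAt
  · intro x hx
    simp [image_eq_zero_of_notMem_tsupport hx, pder_eq_zero_of_not_mem_tsupport hx]

lemma key_term {X : Set (Euc n)} (hXo : IsOpen X) {φ : Euc n → ℝ}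
    (hφ : ContDiffOn ℝ (⊤ : ℕ∞) φ X)
    {u v : Euc n → ℝ} (hu : ContDiff ℝ (⊤ : ℕ∞) u) (huc : HasCompactSupport u)
    (hus : tsupport u ⊆ X)
    (hv : ContDiff ℝ (⊤ : ℕ∞) v) (ℓ₁ ℓ₂ : Fin n) :
    (∫ x in X, deltaOp φ ℓ₁ u x * deltaOp φ ℓ₂ v x * exp (-φ x)) =
      ∫ x in X, (pder ℓ₂ u x * pder ℓ₁ v x + hessMat φ x ℓ₁ ℓ₂ * u x * v x) * exp (-φ x) := by
  have hφx : ∀ x ∈ X, ContDiffAt ℝ (⊤:ℕ∞) φ x := fun x hx => hφ.contDiffAt (hXo.mem_nhds hx)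
  have hEg : ∀ x ∈ X, ContDiffAt ℝ (⊤:ℕ∞) (fun y => exp (-φ y)) x :=
    fun x hx => ((hφx x hx).neg).exp
  have hg1 : ∀ x ∈ X, ContDiffAt ℝ (⊤:ℕ∞)
      (fun y => (pder ℓ₂ φ y * v y - pder ℓ₂ v y) * exp (-φ y)) x := fun x hx =>
    (((contDiffAt_pder (hφx x hx) ℓ₂).mul hv.contDiffAt).sub
      (contDiff_pder hv ℓ₂).contDiffAt).mul (hEg x hx)
  have hg2 : ∀ x ∈ X, ContDiffAt ℝ (⊤:ℕ∞) (fun y => pder ℓ₁ v y * exp (-φ y)) x :=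
    fun x hx => ((contDiff_pder hv ℓ₁).contDiffAt).mul (hEg x hx)
  obtain ⟨hI1i, hI1⟩ := aux_F hXo hu huc hus hg1 ℓ₁
  obtain ⟨hI2i, hI2⟩ := aux_F hXo hu huc hus hg2 ℓ₂
  have hB : Integrable (fun x =>
      (pder ℓ₂ u x * pder ℓ₁ v x + hessMat φ x ℓ₁ ℓ₂ * u x * v x) * exp (-φ x)) :=
    integrable_ph hXo hφ hu huc hus hv ℓ₁ ℓ₂
  have hpt : ∀ x, deltaOp φ ℓ₁ u x * deltaOp φ ℓ₂ v x * exp (-φ x) =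
      (pder ℓ₂ u x * pder ℓ₁ v x + hessMat φ x ℓ₁ ℓ₂ * u x * v x) * exp (-φ x) +
      (-(pder ℓ₁ (fun y => u y * ((pder ℓ₂ φ y * v y - pder ℓ₂ v y) * exp (-φ y))) x)
        - pder ℓ₂ (fun y => u y * (pder ℓ₁ v y * exp (-φ y))) x) := by
    intro x
    by_cases hx : x ∈ X
    · have hφc : ContDiffAt ℝ (⊤:ℕ∞) φ x := hφx x hx
      have hφd : DifferentiableAt ℝ φ x := hφc.differentiableAt (by norm_cast)
      have hp2 : DifferentiableAt ℝ (fun y => pder ℓ₂ φ y) x :=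
        (contDiffAt_pder hφc ℓ₂).differentiableAt (by norm_cast)
      have hud : DifferentiableAt ℝ u x := (hu.differentiable (by norm_cast)).differentiableAt
      have hvd : DifferentiableAt ℝ v x := (hv.differentiable (by norm_cast)).differentiableAt
      have hv1 : DifferentiableAt ℝ (fun y => pder ℓ₁ v y) x :=
        ((contDiff_pder hv ℓ₁).differentiable (by norm_cast)).differentiableAt
      have hv2 : DifferentiableAt ℝ (fun y => pder ℓ₂ v y) x :=
        ((contDiff_pder hv ℓ₂).differentiable (by norm_cast)).differentiableAt
      have hEd : DifferentiableAt ℝ (fun y => exp (-φ y)) x := (hφd.neg).exp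
      have hD2d : DifferentiableAt ℝ (fun y => pder ℓ₂ φ y * v y - pder ℓ₂ v y) x :=
        (hp2.mul hvd).sub hv2
      simp only [deltaOp, hessMat]
      rw [pder_mul (g := fun y => (pder ℓ₂ φ y * v y - pder ℓ₂ v y) * exp (-φ y)) hud (hD2d.mul hEd) ℓ₁,
          pder_mul hD2d hEd ℓ₁,
          pder_mul (g := fun y => pder ℓ₁ v y * exp (-φ y)) hud (hv1.mul hEd) ℓ₂,
          pder_mul hv1 hEd ℓ₂,
          pder_sub (f := fun y => pder ℓ₂ φ y * v y) (hp2.mul hvd) hv2 ℓ₁,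
          pder_mul hp2 hvd ℓ₁,
          pder_exp_neg hφd ℓ₁, pder_exp_neg hφd ℓ₂,
          pder_pder_comm hv x ℓ₂ ℓ₁]
      ring
    · have hxu : x ∉ tsupport u := fun h => hx (hus h)
      simp [deltaOp, image_eq_zero_of_notMem_tsupport hxu,
        pder_eq_zero_of_not_mem_tsupport hxu, pder_mul_left_eq_zero hxu]
  have hz : ∀ x ∉ X, deltaOp φ ℓ₁ u x * deltaOp φ ℓ₂ v x * exp (-φ x) = 0 := by
    intro x hx
    have hxu : x ∉ tsupport u := fun h => hx (hus h)
    simp [deltaOp, image_eq_zero_of_notMem_tsupport hxu, pder_eq_zero_of_not_mem_tsupport hxu]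
  have hz' : ∀ x ∉ X,
      (pder ℓ₂ u x * pder ℓ₁ v x + hessMat φ x ℓ₁ ℓ₂ * u x * v x) * exp (-φ x) = 0 := by
    intro x hx
    have hxu : x ∉ tsupport u := fun h => hx (hus h)
    simp [image_eq_zero_of_notMem_tsupport hxu, pder_eq_zero_of_not_mem_tsupport hxu]
  rw [setIntegral_eq_integral_of_forall_compl_eq_zero hz,
      setIntegral_eq_integral_of_forall_compl_eq_zero hz']
  calc ∫ x, deltaOp φ ℓ₁ u x * deltaOp φ ℓ₂ v x * exp (-φ x)
      = ∫ x, ((pder ℓ₂ u x * pder ℓ₁ v x + hessMat φ x ℓ₁ ℓ₂ * u x * v x) * exp (-φ x) +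
        (-(pder ℓ₁ (fun y => u y * ((pder ℓ₂ φ y * v y - pder ℓ₂ v y) * exp (-φ y))) x)
          - pder ℓ₂ (fun y => u y * (pder ℓ₁ v y * exp (-φ y))) x)) :=
        integral_congr_ae (Filter.Eventually.of_forall hpt)
    _ = (∫ x, (pder ℓ₂ u x * pder ℓ₁ v x + hessMat φ x ℓ₁ ℓ₂ * u x * v x) * exp (-φ x)) +
        ∫ x, (-(pder ℓ₁ (fun y => u y * ((pder ℓ₂ φ y * v y - pder ℓ₂ v y) * exp (-φ y))) x)
          - pder ℓ₂ (fun y => u y * (pder ℓ₁ v y * exp (-φ y))) x) :=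
        integral_add hB (hI1i.neg.sub hI2i)
    _ = ∫ x, (pder ℓ₂ u x * pder ℓ₁ v x + hessMat φ x ℓ₁ ℓ₂ * u x * v x) * exp (-φ x) := by
        have hn : Integrable (fun x =>
            -(pder ℓ₁ (fun y => u y * ((pder ℓ₂ φ y * v y - pder ℓ₂ v y) * exp (-φ y))) x)) :=
          hI1i.neg
        rw [integral_sub hn hI2i, integral_neg, hI1, hI2]
        simp

lemma sum_sq_expand {α β : Type*} [Fintype α] [Fintype β] (f : α → β → ℝ) (e : ℝ) :
    (∑ i : α, ∑ l : β, f i l)^2 * e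
      = ∑ i₁ : α, ∑ i₂ : α, ∑ l₁ : β, ∑ l₂ : β, f i₁ l₁ * f i₂ l₂ * e := by
  rw [sq, Finset.sum_mul_sum, Finset.sum_mul]
  refine Finset.sum_congr rfl fun i₁ _ => ?_
  rw [Finset.sum_mul]
  refine Finset.sum_congr rfl fun i₂ _ => ?_
  rw [Finset.sum_mul_sum, Finset.sum_mul]
  refine Finset.sum_congr rfl fun l₁ _ => ?_
  rw [Finset.sum_mul]

lemma integral_sum5 {α₁ α₂ α₃ α₄ α₅ : Type*}
    [Fintype α₁] [Fintype α₂] [Fintype α₃] [Fintype α₄] [Fintype α₅]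
    {μ : Measure (Euc n)} (g : α₁ → α₂ → α₃ → α₄ → α₅ → Euc n → ℝ)
    (hg : ∀ a b c d e, Integrable (g a b c d e) μ) :
    (∫ x, (∑ a : α₁, ∑ b : α₂, ∑ c : α₃, ∑ d : α₄, ∑ e : α₅, g a b c d e x) ∂μ) =
      ∑ a : α₁, ∑ b : α₂, ∑ c : α₃, ∑ d : α₄, ∑ e : α₅, ∫ x, g a b c d e x ∂μ := by
  have h4 : ∀ a b c d, Integrable (fun x => ∑ e, g a b c d e x) μ :=
    fun a b c d => integrable_finset_sum _ fun e _ => hg a b c d e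
  have h3 : ∀ a b c, Integrable (fun x => ∑ d, ∑ e, g a b c d e x) μ :=
    fun a b c => integrable_finset_sum _ fun d _ => h4 a b c d
  have h2 : ∀ a b, Integrable (fun x => ∑ c, ∑ d, ∑ e, g a b c d e x) μ :=
    fun a b => integrable_finset_sum _ fun c _ => h3 a b c
  have h1 : ∀ a, Integrable (fun x => ∑ b, ∑ c, ∑ d, ∑ e, g a b c d e x) μ :=
    fun a => integrable_finset_sum _ fun b _ => h2 a b
  rw [integral_finset_sum _ fun a _ => h1 a]
  refine Finset.sum_congr rfl fun a _ => ?_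
  rw [integral_finset_sum _ fun b _ => h2 a b]
  refine Finset.sum_congr rfl fun b _ => ?_
  rw [integral_finset_sum _ fun c _ => h3 a b c]
  refine Finset.sum_congr rfl fun c _ => ?_
  rw [integral_finset_sum _ fun d _ => h4 a b c d]
  refine Finset.sum_congr rfl fun d _ => ?_
  rw [integral_finset_sum _ fun e _ => hg a b c d e]

end AuxProof

/-- The integral identity
`∫_X Σ'_J |Σ'_I Σ_ℓ sign(ℓJ,I) δ^φ_ℓ(η_I)|² e^{−φ} dV
 = ∫_X Σ'_J Σ'_{I₁,I₂} Σ_{ℓ₁,ℓ₂} sign(ℓ₁J,I₁) sign(ℓ₂J,I₂)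
   ((∂η_{I₁}/∂x^{ℓ₂})(∂η_{I₂}/∂x^{ℓ₁}) + (∂²φ/∂x^{ℓ₁}∂x^{ℓ₂}) η_{I₁} η_{I₂}) e^{−φ} dV`
for every smooth compactly supported `k`-form `η` on `X`. -/
theorem delta_sum_norm_sq_identity
    (n k : ℕ) (X : Set (Euc n)) (hXo : IsOpen X) (hXc : IsConnected X)
    (φ : Euc n → ℝ) (hφ : ContDiffOn ℝ (⊤ : ℕ∞) φ X)
    (η : Form n k) (hη : IsTestForm X η) :
    (∫ x in X,
      (∑ J : MIdx n (k - 1),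
        (∑ I : MIdx n k, ∑ ℓ : Fin n, msign ℓ J.1 I.1 * deltaOp φ ℓ (fun y => η y I) x) ^ 2)
      * exp (-φ x)) =
    ∫ x in X,
      (∑ J : MIdx n (k - 1), ∑ I₁ : MIdx n k, ∑ I₂ : MIdx n k,
        ∑ ℓ₁ : Fin n, ∑ ℓ₂ : Fin n,
        msign ℓ₁ J.1 I₁.1 * msign ℓ₂ J.1 I₂.1 *
          (pder ℓ₂ (fun y => η y I₁) x * pder ℓ₁ (fun y => η y I₂) x
            + hessMat φ x ℓ₁ ℓ₂ * η x I₁ * η x I₂))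
      * exp (-φ x) := by
  obtain ⟨hsm, hcs, hsupp⟩ := hη
  have hLHS : ∀ x : Euc n,
      (∑ J : MIdx n (k - 1),
        (∑ I : MIdx n k, ∑ ℓ : Fin n, msign ℓ J.1 I.1 * deltaOp φ ℓ (fun y => η y I) x) ^ 2)
      * exp (-φ x)
      = ∑ J : MIdx n (k - 1), ∑ I₁ : MIdx n k, ∑ I₂ : MIdx n k, ∑ ℓ₁ : Fin n, ∑ ℓ₂ : Fin n,
          msign ℓ₁ J.1 I₁.1 * msign ℓ₂ J.1 I₂.1 *
            (deltaOp φ ℓ₁ (fun y => η y I₁) x * deltaOp φ ℓ₂ (fun y => η y I₂) x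
              * exp (-φ x)) := by
    intro x
    rw [Finset.sum_mul]
    refine Finset.sum_congr rfl fun J _ => ?_
    rw [sum_sq_expand (fun (I : MIdx n k) (ℓ : Fin n) =>
      msign ℓ J.1 I.1 * deltaOp φ ℓ (fun y => η y I) x) (exp (-φ x))]
    exact Finset.sum_congr rfl fun I₁ _ => Finset.sum_congr rfl fun I₂ _ =>
      Finset.sum_congr rfl fun ℓ₁ _ => Finset.sum_congr rfl fun ℓ₂ _ => by ring
  have hRHS : ∀ x : Euc n,
      (∑ J : MIdx n (k - 1), ∑ I₁ : MIdx n k, ∑ I₂ : MIdx n k, ∑ ℓ₁ : Fin n, ∑ ℓ₂ : Fin n,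
        msign ℓ₁ J.1 I₁.1 * msign ℓ₂ J.1 I₂.1 *
          (pder ℓ₂ (fun y => η y I₁) x * pder ℓ₁ (fun y => η y I₂) x
            + hessMat φ x ℓ₁ ℓ₂ * η x I₁ * η x I₂))
      * exp (-φ x)
      = ∑ J : MIdx n (k - 1), ∑ I₁ : MIdx n k, ∑ I₂ : MIdx n k, ∑ ℓ₁ : Fin n, ∑ ℓ₂ : Fin n,
          msign ℓ₁ J.1 I₁.1 * msign ℓ₂ J.1 I₂.1 *
            ((pder ℓ₂ (fun y => η y I₁) x * pder ℓ₁ (fun y => η y I₂) x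
              + hessMat φ x ℓ₁ ℓ₂ * η x I₁ * η x I₂) * exp (-φ x)) := by
    intro x
    simp only [Finset.sum_mul]
    exact Finset.sum_congr rfl fun J _ => Finset.sum_congr rfl fun I₁ _ =>
      Finset.sum_congr rfl fun I₂ _ => Finset.sum_congr rfl fun ℓ₁ _ =>
      Finset.sum_congr rfl fun ℓ₂ _ => by ring
  calc (∫ x in X,
      (∑ J : MIdx n (k - 1),
        (∑ I : MIdx n k, ∑ ℓ : Fin n, msign ℓ J.1 I.1 * deltaOp φ ℓ (fun y => η y I) x) ^ 2)
      * exp (-φ x))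
      = ∫ x in X, ∑ J : MIdx n (k - 1), ∑ I₁ : MIdx n k, ∑ I₂ : MIdx n k,
          ∑ ℓ₁ : Fin n, ∑ ℓ₂ : Fin n,
          msign ℓ₁ J.1 I₁.1 * msign ℓ₂ J.1 I₂.1 *
            (deltaOp φ ℓ₁ (fun y => η y I₁) x * deltaOp φ ℓ₂ (fun y => η y I₂) x
              * exp (-φ x)) :=
        integral_congr_ae (Filter.Eventually.of_forall fun x => hLHS x)
    _ = ∑ J : MIdx n (k - 1), ∑ I₁ : MIdx n k, ∑ I₂ : MIdx n k, ∑ ℓ₁ : Fin n, ∑ ℓ₂ : Fin n,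
          ∫ x in X, msign ℓ₁ J.1 I₁.1 * msign ℓ₂ J.1 I₂.1 *
            (deltaOp φ ℓ₁ (fun y => η y I₁) x * deltaOp φ ℓ₂ (fun y => η y I₂) x
              * exp (-φ x)) := by
        exact integral_sum5 _ fun J I₁ I₂ ℓ₁ ℓ₂ =>
          ((integrable_dd hXo hφ (hsm I₁) (hcs I₁) (hsupp I₁) (hsm I₂) ℓ₁ ℓ₂).restrict).const_mul _
    _ = ∑ J : MIdx n (k - 1), ∑ I₁ : MIdx n k, ∑ I₂ : MIdx n k, ∑ ℓ₁ : Fin n, ∑ ℓ₂ : Fin n,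
          ∫ x in X, msign ℓ₁ J.1 I₁.1 * msign ℓ₂ J.1 I₂.1 *
            ((pder ℓ₂ (fun y => η y I₁) x * pder ℓ₁ (fun y => η y I₂) x
              + hessMat φ x ℓ₁ ℓ₂ * η x I₁ * η x I₂) * exp (-φ x)) := by
        refine Finset.sum_congr rfl fun J _ => Finset.sum_congr rfl fun I₁ _ =>
          Finset.sum_congr rfl fun I₂ _ => Finset.sum_congr rfl fun ℓ₁ _ =>
          Finset.sum_congr rfl fun ℓ₂ _ => ?_
        rw [MeasureTheory.integral_const_mul, MeasureTheory.integral_const_mul,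
          key_term hXo hφ (hsm I₁) (hcs I₁) (hsupp I₁) (hsm I₂) ℓ₁ ℓ₂]
    _ = ∫ x in X, ∑ J : MIdx n (k - 1), ∑ I₁ : MIdx n k, ∑ I₂ : MIdx n k,
          ∑ ℓ₁ : Fin n, ∑ ℓ₂ : Fin n,
          msign ℓ₁ J.1 I₁.1 * msign ℓ₂ J.1 I₂.1 *
            ((pder ℓ₂ (fun y => η y I₁) x * pder ℓ₁ (fun y => η y I₂) x
              + hessMat φ x ℓ₁ ℓ₂ * η x I₁ * η x I₂) * exp (-φ x)) := by
        refine (integral_sum5 _ fun J I₁ I₂ ℓ₁ ℓ₂ => ?_).symm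
        exact ((integrable_ph hXo hφ (hsm I₁) (hcs I₁) (hsupp I₁) (hsm I₂) ℓ₁ ℓ₂).restrict).const_mul _
    _ = ∫ x in X,
      (∑ J : MIdx n (k - 1), ∑ I₁ : MIdx n k, ∑ I₂ : MIdx n k,
        ∑ ℓ₁ : Fin n, ∑ ℓ₂ : Fin n,
        msign ℓ₁ J.1 I₁.1 * msign ℓ₂ J.1 I₂.1 *
          (pder ℓ₂ (fun y => η y I₁) x * pder ℓ₁ (fun y => η y I₂) x
            + hessMat φ x ℓ₁ ℓ₂ * η x I₁ * η x I₂))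
      * exp (-φ x) :=
        (integral_congr_ae (Filter.Eventually.of_forall fun x => hRHS x)).symm
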